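/- arXiv:1905.05094 — 8 statements merged into one kernel-verified Lean document; each statement's English description precedes it below -/
import Mathlib

section
/- Let f(x₁,…,xₙ) = Σᵢ₌₁ⁿ aᵢ ℓᵢ(x)^d where the ℓᵢ are n linearly independent linear forms over a field K of characteristic 0, the aᵢ are nonzero constants, and d ≥ 2. Then the Hessian determinant of f equals c·∏ᵢ₌₁ⁿ ℓᵢ(x)^{d-2} for some nonzero constant c ∈ K; in particular det H_f is not identically 0. -/
/-!
Writing `L` for the coefficient matrix of the forms `ℓₖ`, the chain rule gives
`H_f = Lᵀ · diag(d(d-1) aₖ ℓₖ^(d-2)) · L`, so `det H_f = det(L)² ∏ₖ d(d-1) aₖ ℓₖ^(d-2)`.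
Linear independence makes `det L ≠ 0`, characteristic zero makes `d(d-1) ≠ 0`, and each `ℓₖ`
is a nonzero polynomial, so the product is nonzero in the domain `K[x₁,…,xₙ]`.
-/

open MvPolynomial Matrix

namespace MvPolynomial

variable {R σ : Type*} [Fintype σ]

section CommSemiring

variable [CommSemiring R]

noncomputable def linearForm (v : σ → R) : MvPolynomial σ R := ∑ j, C (v j) * X j

noncomputable def hessian (f : MvPolynomial σ R) : Matrix σ σ (MvPolynomial σ R) :=
  Matrix.of fun i j => pderiv i (pderiv j f)

@[simp]
theorem pderiv_linearForm (v : σ → R) (i : σ) : pderiv i (linearForm v) = C (v i) := by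
  classical
  simp [linearForm, Pi.single_apply]

theorem linearForm_ne_zero {v : σ → R} (hv : v ≠ 0) : linearForm v ≠ 0 := by
  obtain ⟨i, hi⟩ := Function.ne_iff.mp hv
  intro h
  exact hi (C_injective σ R (by simpa [h] using (pderiv_linearForm v i).symm))

/-- For `d < 2` both sides vanish, as `d * (d - 1) = 0`. -/
theorem pderiv_pderiv_linearForm_pow (v : σ → R) (d : ℕ) (i j : σ) :
    pderiv i (pderiv j (linearForm v ^ d)) =
      C (v i * ((d * (d - 1) : ℕ) : R) * v j) * linearForm v ^ (d - 2) := by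
  simp only [pderiv_pow, pderiv_mul, pderiv_linearForm, pderiv_C, Derivation.map_natCast]
  rw [Nat.sub_sub]
  simp only [map_mul, map_natCast, Nat.cast_mul]
  ring

end CommSemiring

variable [CommRing R] [DecidableEq σ]

theorem hessian_sum_C_mul_linearForm_pow (a : σ → R) (ℓ : σ → σ → R) (d : ℕ) :
    hessian (∑ k, C (a k) * linearForm (ℓ k) ^ d) =
      ((Matrix.of ℓ).map C)ᵀ *
        diagonal (fun k => C (a k * ((d * (d - 1) : ℕ) : R)) * linearForm (ℓ k) ^ (d - 2)) *
          (Matrix.of ℓ).map C := by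
  ext i j : 1
  rw [mul_apply]
  simp only [hessian, of_apply, map_sum, pderiv_C_mul, pderiv_pderiv_linearForm_pow,
    mul_diagonal, transpose_apply, map_apply]
  refine Finset.sum_congr rfl fun k _ => ?_
  simp only [map_mul]
  ring

theorem det_hessian_sum_C_mul_linearForm_pow (a : σ → R) (ℓ : σ → σ → R) (d : ℕ) :
    (hessian (∑ k, C (a k) * linearForm (ℓ k) ^ d)).det =
      C ((Matrix.of ℓ).det ^ 2 * ∏ k, a k * ((d * (d - 1) : ℕ) : R)) *
        ∏ k, linearForm (ℓ k) ^ (d - 2) := by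
  have hL : ((Matrix.of ℓ).map C).det = (C (Matrix.of ℓ).det : MvPolynomial σ R) :=
    (RingHom.map_det C _).symm
  rw [hessian_sum_C_mul_linearForm_pow, det_mul, det_mul, det_transpose, det_diagonal, hL,
    Finset.prod_mul_distrib, ← map_prod]
  simp only [map_mul, map_pow]
  ring

end MvPolynomial

/-- If `f = Σᵢ aᵢ ℓᵢ^d` with the `ℓᵢ` linearly independent linear forms, the `aᵢ`
nonzero and `d ≥ 2`, then `det H_f = c ∏ᵢ ℓᵢ^(d-2)` for some nonzero constant `c`;
in particular `det H_f ≠ 0`. -/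
theorem hessian_det_of_sum_of_powers {K : Type*} [Field K] [CharZero K] {n : ℕ}
    (a : Fin n → K) (ha : ∀ i, a i ≠ 0)
    (ℓ : Fin n → Fin n → K) (hℓ : LinearIndependent K ℓ)
    (d : ℕ) (hd : 2 ≤ d)
    (f : MvPolynomial (Fin n) K)
    (hf : f = ∑ i, MvPolynomial.C (a i) *
      (∑ j, MvPolynomial.C (ℓ i j) * MvPolynomial.X j) ^ d) :
    ∃ c : K, c ≠ 0 ∧
      (Matrix.of (fun i j => MvPolynomial.pderiv i (MvPolynomial.pderiv j f))).det
        = MvPolynomial.C c *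
          ∏ i, (∑ j, MvPolynomial.C (ℓ i j) * MvPolynomial.X j) ^ (d - 2) ∧
      (Matrix.of (fun i j => MvPolynomial.pderiv i (MvPolynomial.pderiv j f))).det ≠ 0 := by
  have hℓ_det : (Matrix.of ℓ).det ≠ 0 :=
    ((isUnit_iff_isUnit_det _).mp (linearIndependent_rows_iff_isUnit.mp hℓ)).ne_zero
  have hd_cast : ((d * (d - 1) : ℕ) : K) ≠ 0 :=
    Nat.cast_ne_zero.mpr (Nat.mul_ne_zero (by omega) (by omega))
  set c := (Matrix.of ℓ).det ^ 2 * ∏ k, a k * ((d * (d - 1) : ℕ) : K)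
  have hc : c ≠ 0 := mul_ne_zero (pow_ne_zero _ hℓ_det)
    (Finset.prod_ne_zero_iff.mpr fun k _ => mul_ne_zero (ha k) hd_cast)
  subst hf
  have hdet := det_hessian_sum_C_mul_linearForm_pow a ℓ d
  refine ⟨c, hc, hdet, ?_⟩
  exact hdet.trans_ne <| mul_ne_zero (C_ne_zero.mpr hc) <|
    Finset.prod_ne_zero_iff.mpr fun k _ => pow_ne_zero _ (linearForm_ne_zero (hℓ.ne_zero k))
end

section
/- Let K = ℝ or K = ℂ and let A₁,…,A_k be symmetric matrices in Mₙ(K). If the Aᵢ are simultaneously diagonalizable, then there exists an orthogonal matrix P over K (PᵀP = Id) such that all matrices PᵀAᵢP are diagonal. -/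
open Matrix

/-!
Let `Q` diagonalize every `Aᵢ`, with `Dᵢ = Q⁻¹ Aᵢ Q`. Since `Aᵢ` and `Dᵢ` are symmetric, the Gram
matrix `G = Qᵀ Q` commutes with every `Dᵢ`, so `G` is block diagonal along the joint eigenspaces
of the `Dᵢ`. Each block is again a Gram matrix; diagonalizing it by congruence leaves sums of
squares on the diagonal, and these have square roots in `K` (they are nonnegative when `K = ℝ`).
This writes `G = Rᵀ R` with `R` block diagonal as well, hence commuting with the `Dᵢ`, and then
`P = Q R⁻¹` is orthogonal with `Pᵀ Aᵢ P = R Dᵢ R⁻¹ = Dᵢ`.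
-/

theorem RCLike.isSquare_sum_mul_self {K : Type*} [RCLike K] {ι : Type*} [Fintype ι]
    (w : ι → K) : IsSquare (∑ t, w t * w t) := by
  rcases RCLike.I_eq_zero_or_im_I_eq_one (K := K) with hI | hI
  · have hre : ∀ z : K, (re z : K) = z := fun z => by
      simpa [hI] using RCLike.re_add_im z
    have hs : 0 ≤ ∑ t, re (w t) * re (w t) := Finset.sum_nonneg fun t _ => mul_self_nonneg _
    refine ⟨(√(∑ t, re (w t) * re (w t)) : ℝ), ?_⟩
    rw [← RCLike.ofReal_mul, Real.mul_self_sqrt hs]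
    push_cast
    simp only [hre]
  · set e := complexRingEquiv hI
    obtain ⟨r, hr⟩ := Complex.isSquare (e (∑ t, w t * w t))
    exact ⟨e.symm r, e.injective (by simpa using hr)⟩

namespace Matrix

theorem IsSymm.exists_isUnit_det_isDiag_transpose_mul_mul {K : Type*} [Field K]
    [Invertible (2 : K)] {d : Type*} [Fintype d] [DecidableEq d] {N : Matrix d d K}
    (hN : N.IsSymm) : ∃ E : Matrix d d K, IsUnit E.det ∧ (Eᵀ * N * E).IsDiag := by
  let b := Pi.basisFun K d
  obtain ⟨v, hv⟩ := LinearMap.BilinForm.exists_orthogonal_basis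
    (LinearMap.BilinForm.isSymm_iff.mp (isSymm_toBilin_iff_isSymm b |>.mpr hN))
  let u := v.reindex (v.indexEquiv b)
  let := b.invertibleToMatrix u
  refine ⟨b.toMatrix u, isUnit_det_of_invertible _, ?_⟩
  rw [← LinearMap.BilinForm.toMatrix_toBilin b N,
    LinearMap.BilinForm.toMatrix_mul_basis_toMatrix]
  intro p q hpq
  rw [LinearMap.BilinForm.toMatrix_apply, Module.Basis.reindex_apply, Module.Basis.reindex_apply]
  exact hv fun h => hpq ((v.indexEquiv b).symm.injective h)

theorem eq_of_transpose_mul_mul_eq {R : Type*} [CommRing R] {d : Type*} [Fintype d]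
    [DecidableEq d] {M N E : Matrix d d R} (hE : IsUnit E.det)
    (h : Eᵀ * M * E = Eᵀ * N * E) : M = N := by
  have hEt : IsUnit Eᵀ.det := by rwa [det_transpose]
  have := congrArg (fun X => Eᵀ⁻¹ * X * E⁻¹) h
  simpa only [Matrix.mul_assoc, nonsing_inv_mul_cancel_left _ _ hEt, mul_nonsing_inv _ hE,
    Matrix.mul_one] using this

theorem exists_transpose_mul_self_eq_transpose_mul_self {K : Type*} [RCLike K]
    {m d : Type*} [Fintype m] [Fintype d] [DecidableEq d] (X : Matrix m d K) :
    ∃ Y : Matrix d d K, Yᵀ * Y = Xᵀ * X := by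
  have hsymm : (Xᵀ * X).IsSymm := by rw [IsSymm, transpose_mul, transpose_transpose]
  obtain ⟨E, hE, hdiag⟩ := hsymm.exists_isUnit_det_isDiag_transpose_mul_mul
  have hgram : Eᵀ * (Xᵀ * X) * E = (X * E)ᵀ * (X * E) := by
    simp only [transpose_mul, Matrix.mul_assoc]
  choose z hz using fun p => RCLike.isSquare_sum_mul_self fun t => (X * E) t p
  have hD : (X * E)ᵀ * (X * E) = diagonal z * diagonal z := by
    have hdiag' : ((X * E)ᵀ * (X * E)).IsDiag := hgram ▸ hdiag
    rw [diagonal_mul_diagonal, ← hdiag'.diagonal_diag]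
    congr 1
    funext p
    exact hz p
  refine ⟨diagonal z * E⁻¹, eq_of_transpose_mul_mul_eq hE ?_⟩
  calc Eᵀ * ((diagonal z * E⁻¹)ᵀ * (diagonal z * E⁻¹)) * E
      = diagonal z * diagonal z := by
        simp only [transpose_mul, diagonal_transpose, Matrix.mul_assoc, nonsing_inv_mul _ hE]
        rw [← Matrix.mul_assoc, ← transpose_mul, nonsing_inv_mul _ hE, transpose_one,
          Matrix.one_mul, Matrix.mul_one]
    _ = Eᵀ * (Xᵀ * X) * E := by rw [hgram, hD]

theorem exists_blockwise_transpose_mul_self_eq {K : Type*} [RCLike K]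
    {m d S : Type*} [Fintype m] [Fintype d] [DecidableEq d] (X : Matrix m d K) (σ : d → S)
    (hX : ∀ j l, σ j ≠ σ l → (Xᵀ * X) j l = 0) :
    ∃ R : Matrix d d K, Rᵀ * R = Xᵀ * X ∧ ∀ j l, σ j ≠ σ l → R j l = 0 := by
  classical
  let e := Equiv.sigmaFiberEquiv (Set.rangeFactorization σ)
  let Xs s : Matrix m {j // Set.rangeFactorization σ j = s} K := X.submatrix id Subtype.val
  choose Y hY using fun s => exists_transpose_mul_self_eq_transpose_mul_self (Xs s)
  have hblock : blockDiagonal' (fun s => (Xs s)ᵀ * Xs s) = (Xᵀ * X).submatrix e e := by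
    ext ⟨s, j, hj⟩ ⟨t, l, hl⟩
    by_cases hst : s = t
    · subst hst
      rw [blockDiagonal'_apply_eq]
      rfl
    · rw [blockDiagonal'_apply_ne _ _ _ hst]
      refine (hX j l fun h => hst ?_).symm
      rw [← hj, ← hl]
      exact Subtype.ext h
  refine ⟨(blockDiagonal' Y).submatrix e.symm e.symm, ?_, ?_⟩
  · rw [transpose_submatrix, blockDiagonal'_transpose, submatrix_mul_equiv,
      ← blockDiagonal'_mul, funext hY, hblock, submatrix_submatrix]
    simp
  · intro j l hjl
    show blockDiagonal' Y (e.symm j) (e.symm l) = 0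
    exact blockDiagonal'_apply_ne Y _ _ fun h => hjl (Subtype.ext_iff.mp h)

theorem commute_diagonal_iff {R : Type*} [CommRing R] [NoZeroDivisors R] {d : Type*}
    [Fintype d] [DecidableEq d] (M : Matrix d d R) (δ : d → R) :
    Commute M (diagonal δ) ↔ ∀ j l, δ j ≠ δ l → M j l = 0 := by
  rw [Commute, SemiconjBy, ← Matrix.ext_iff]
  refine forall₂_congr fun j l => ?_
  rw [mul_diagonal, diagonal_mul, mul_comm (δ j), ← sub_eq_zero, ← mul_sub, mul_eq_zero,
    sub_eq_zero, eq_comm (a := δ l)]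
  tauto

theorem forall_commute_diagonal_iff {R : Type*} [CommRing R] [NoZeroDivisors R]
    {d ι : Type*} [Fintype d] [DecidableEq d] (M : Matrix d d R) (δ : ι → d → R) :
    (∀ i, Commute M (diagonal (δ i))) ↔
      ∀ j l, (fun i => δ i j) ≠ (fun i => δ i l) → M j l = 0 := by
  simp only [commute_diagonal_iff, Function.ne_iff]
  grind

theorem exists_transpose_mul_self_eq_of_commute_diagonal {K : Type*} [RCLike K]
    {m d ι : Type*} [Fintype m] [Fintype d] [DecidableEq d] (X : Matrix m d K)
    (δ : ι → d → K) (hX : ∀ i, Commute (Xᵀ * X) (diagonal (δ i))) :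
    ∃ R : Matrix d d K, Rᵀ * R = Xᵀ * X ∧ ∀ i, Commute R (diagonal (δ i)) := by
  obtain ⟨R, hR, hRδ⟩ := exists_blockwise_transpose_mul_self_eq X (fun j i => δ i j)
    ((forall_commute_diagonal_iff _ δ).mp hX)
  exact ⟨R, hR, (forall_commute_diagonal_iff R δ).mpr hRδ⟩

theorem commute_transpose_mul_self_of_mul_eq {R : Type*} [CommRing R] {m d : Type*}
    [Fintype m] [Fintype d] {A : Matrix m m R} {Q : Matrix m d R} {D : Matrix d d R}
    (hA : Aᵀ = A) (hD : Dᵀ = D) (h : A * Q = Q * D) : Commute (Qᵀ * Q) D :=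
  calc Qᵀ * Q * D = Qᵀ * (A * Q) := by rw [h, Matrix.mul_assoc]
    _ = (Qᵀ * (A * Q))ᵀ := by rw [transpose_mul, transpose_mul, hA, transpose_transpose,
        Matrix.mul_assoc]
    _ = D * (Qᵀ * Q) := by rw [h, transpose_mul, transpose_mul, hD, transpose_transpose,
        Matrix.mul_assoc]

theorem transpose_mul_mul_mul_inv_eq {R : Type*} [CommRing R] {m d : Type*} [Fintype m]
    [Fintype d] [DecidableEq d] {A : Matrix m m R} {Q : Matrix m d R} {G D : Matrix d d R}
    (hAQ : A * Q = Q * D) (hGQ : Gᵀ * G = Qᵀ * Q) (hGD : Commute G D) (hG : IsUnit G.det) :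
    (Q * G⁻¹)ᵀ * A * (Q * G⁻¹) = D :=
  calc (Q * G⁻¹)ᵀ * A * (Q * G⁻¹) = G⁻¹ᵀ * (Qᵀ * (A * Q)) * G⁻¹ := by
        simp only [transpose_mul, Matrix.mul_assoc]
    _ = (G⁻¹ᵀ * Gᵀ) * (G * D) * G⁻¹ := by
        rw [hAQ, ← Matrix.mul_assoc Qᵀ, ← hGQ]
        simp only [Matrix.mul_assoc]
    _ = D := by
        rw [← transpose_mul, mul_nonsing_inv _ hG, transpose_one, Matrix.one_mul, hGD.eq,
          mul_nonsing_inv_cancel_right _ _ hG]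

end Matrix

/-- Over `K = ℝ` or `K = ℂ`, simultaneously diagonalizable symmetric matrices are
simultaneously diagonalizable by an orthogonal change of basis. -/
theorem simultaneously_orthogonally_diagonalizable
    {K : Type*} [RCLike K] {n k : ℕ}
    (A : Fin k → Matrix (Fin n) (Fin n) K)
    (hsym : ∀ i, (A i)ᵀ = A i)
    (hsd : ∃ Q : Matrix (Fin n) (Fin n) K, IsUnit Q.det ∧ ∀ i, (Q⁻¹ * A i * Q).IsDiag) :
    ∃ P : Matrix (Fin n) (Fin n) K, Pᵀ * P = 1 ∧ ∀ i, (Pᵀ * A i * P).IsDiag := by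
  obtain ⟨Q, hQ, hdiag⟩ := hsd
  let δ i := (Q⁻¹ * A i * Q).diag
  have hAQ : ∀ i, A i * Q = Q * diagonal (δ i) := fun i => by
    rw [(hdiag i).diagonal_diag, Matrix.mul_assoc, mul_nonsing_inv_cancel_left _ _ hQ]
  obtain ⟨R, hRQ, hRδ⟩ := exists_transpose_mul_self_eq_of_commute_diagonal Q δ fun i =>
    commute_transpose_mul_self_of_mul_eq (hsym i) (diagonal_transpose _) (hAQ i)
  have hR : IsUnit R.det := by
    have h := congrArg det hRQ
    rw [det_mul, det_mul, det_transpose, det_transpose] at h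
    exact isUnit_of_mul_isUnit_left (h ▸ hQ.mul hQ)
  refine ⟨Q * R⁻¹, ?_, fun i => ?_⟩
  · simpa using transpose_mul_mul_mul_inv_eq (A := 1) (D := 1) (by simp) hRQ
      (Commute.one_right R) hR
  · rw [transpose_mul_mul_mul_inv_eq (hAQ i) hRQ (hRδ i) hR]
    exact isDiag_diagonal _
end

section
/- A real symmetric tensor of order 3 and size n admits an orthogonal Waring decomposition if and only if its n slices pairwise commute. -/
/-!
If `f(x) = ∑ₘ αₘ (A x)ₘ³` with `A` orthogonal, polarization identifies `T` with the tensor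
`∑ₘ αₘ aₘ ⊗ aₘ ⊗ aₘ` of the rows `aₘ` of `A`. Its `k`-th slice is `Aᵀ diag(αₘ Aₘₖ) A`, and these
commute because `A Aᵀ = 1`.

Conversely, commuting symmetric slices share an orthonormal eigenbasis, the rows `q_a` of an
orthogonal `Q`, say `Tₖ q_a = μₖ(a) q_a`. Since `T` is symmetric in its first and last index,
`μₖ(a) = λ_a Q_ak` with `λ_a = ∑ᵢ Q_ai μᵢ(a)`, so `T = ∑_a λ_a q_a ⊗ q_a ⊗ q_a` and
`f(x) = ∑_a λ_a (Q x)_a³`.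
-/

open Matrix Finset

section Symmetric

variable {ι R : Type*}

def IsSymmetricTensor (T : ι → ι → ι → R) : Prop :=
  ∀ i j k, T i j k = T j i k ∧ T i j k = T i k j

def tensorSlice (T : ι → ι → ι → R) (k : ι) : Matrix ι ι R :=
  Matrix.of fun i j => T i j k

variable {T : ι → ι → ι → R}

theorem IsSymmetricTensor.apply_comm13 (hT : IsSymmetricTensor T) (i j k : ι) :
    T i j k = T k j i := by
  rw [(hT i j k).1, (hT j i k).2, (hT j k i).1]

theorem IsSymmetricTensor.isSymm_tensorSlice (hT : IsSymmetricTensor T) (k : ι) :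
    (tensorSlice T k).IsSymm :=
  Matrix.ext fun i j => (hT j i k).1

theorem IsSymmetricTensor.sub [Sub R] {S : ι → ι → ι → R} (hT : IsSymmetricTensor T)
    (hS : IsSymmetricTensor S) : IsSymmetricTensor (T - S) := fun i j k =>
  ⟨by simp only [Pi.sub_apply, (hT i j k).1, (hS i j k).1],
    by simp only [Pi.sub_apply, (hT i j k).2, (hS i j k).2]⟩

end Symmetric

section TrilinearForm

variable {ι R : Type*} [Fintype ι] [CommRing R]

def trilinearForm (T : ι → ι → ι → R) (x y z : ι → R) : R :=
  ∑ i, ∑ j, ∑ k, T i j k * x i * y j * z k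

variable (T : ι → ι → ι → R) (x x' y y' z z' : ι → R)

theorem trilinearForm_add_left :
    trilinearForm T (x + x') y z = trilinearForm T x y z + trilinearForm T x' y z := by
  simp only [trilinearForm, Pi.add_apply, mul_add, add_mul, sum_add_distrib]

theorem trilinearForm_add_middle :
    trilinearForm T x (y + y') z = trilinearForm T x y z + trilinearForm T x y' z := by
  simp only [trilinearForm, Pi.add_apply, mul_add, add_mul, sum_add_distrib]

theorem trilinearForm_add_right :
    trilinearForm T x y (z + z') = trilinearForm T x y z + trilinearForm T x y z' := by
  simp only [trilinearForm, Pi.add_apply, mul_add, sum_add_distrib]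

theorem trilinearForm_sub_tensor (S : ι → ι → ι → R) :
    trilinearForm (T - S) x y z = trilinearForm T x y z - trilinearForm S x y z := by
  simp only [trilinearForm, Pi.sub_apply, sub_mul, sum_sub_distrib]

theorem trilinearForm_single [DecidableEq ι] (i j k : ι) :
    trilinearForm T (Pi.single i 1) (Pi.single j 1) (Pi.single k 1) = T i j k := by
  simp [trilinearForm, Pi.single_apply]

variable {T}

theorem IsSymmetricTensor.trilinearForm_comm_left (hT : IsSymmetricTensor T) :
    trilinearForm T x y z = trilinearForm T y x z := by
  rw [trilinearForm, sum_comm]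
  refine sum_congr rfl fun j _ => sum_congr rfl fun i _ => sum_congr rfl fun k _ => ?_
  rw [(hT i j k).1]
  ring

theorem IsSymmetricTensor.trilinearForm_comm_right (hT : IsSymmetricTensor T) :
    trilinearForm T x y z = trilinearForm T x z y := by
  refine sum_congr rfl fun i _ => ?_
  rw [sum_comm]
  refine sum_congr rfl fun k _ => sum_congr rfl fun j _ => ?_
  rw [(hT i j k).2]
  ring

theorem IsSymmetricTensor.polarization (hT : IsSymmetricTensor T) :
    6 * trilinearForm T x y z
      = trilinearForm T (x + y + z) (x + y + z) (x + y + z)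
        - trilinearForm T (x + y) (x + y) (x + y) - trilinearForm T (x + z) (x + z) (x + z)
        - trilinearForm T (y + z) (y + z) (y + z)
        + trilinearForm T x x x + trilinearForm T y y y + trilinearForm T z z z := by
  simp only [trilinearForm_add_left, trilinearForm_add_middle, trilinearForm_add_right]
  -- the two transpositions, used as permutation lemmas, sort the arguments of every term
  simp only [hT.trilinearForm_comm_left, hT.trilinearForm_comm_right]
  ring

theorem IsSymmetricTensor.eq_of_trilinearForm_diag_eq [NoZeroDivisors R] [CharZero R]
    {S : ι → ι → ι → R} (hT : IsSymmetricTensor T) (hS : IsSymmetricTensor S)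
    (h : ∀ x, trilinearForm T x x x = trilinearForm S x x x) : T = S := by
  classical
  have hzero : ∀ x, trilinearForm (T - S) x x x = 0 := fun x => by
    rw [trilinearForm_sub_tensor, h, sub_self]
  funext i j k
  have h6 := (hT.sub hS).polarization (Pi.single i 1) (Pi.single j 1) (Pi.single k 1)
  rw [hzero, hzero, hzero, hzero, hzero, hzero, hzero, trilinearForm_single] at h6
  simpa [sub_eq_zero] using h6

end TrilinearForm

section WaringTensor

variable {ι R : Type*} [Fintype ι] [CommRing R]

def waringTensor (α : ι → R) (A : Matrix ι ι R) : ι → ι → ι → R :=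
  fun i j k => ∑ m, α m * A m i * A m j * A m k

variable (α : ι → R) (A : Matrix ι ι R)

theorem isSymmetricTensor_waringTensor : IsSymmetricTensor (waringTensor α A) := fun _ _ _ =>
  ⟨sum_congr rfl fun _ _ => by ring, sum_congr rfl fun _ _ => by ring⟩

theorem trilinearForm_waringTensor (x y z : ι → R) :
    trilinearForm (waringTensor α A) x y z
      = ∑ m, α m * (A *ᵥ x) m * (A *ᵥ y) m * (A *ᵥ z) m := by
  simp only [trilinearForm, waringTensor, mulVec, dotProduct, sum_mul, mul_sum]
  conv_lhs => enter [2, a]; rw [sum_comm_cycle]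
  conv_rhs => enter [2, m]; rw [← sum_comm_cycle, sum_comm]
  rw [sum_comm]
  refine sum_congr rfl fun m _ => sum_congr rfl fun a _ => sum_congr rfl fun b _ =>
    sum_congr rfl fun c _ => by ring

theorem trilinearForm_waringTensor_self (x : ι → R) :
    trilinearForm (waringTensor α A) x x x = ∑ m, α m * (A *ᵥ x) m ^ 3 := by
  rw [trilinearForm_waringTensor]
  exact sum_congr rfl fun _ _ => by ring

theorem tensorSlice_waringTensor [DecidableEq ι] (k : ι) :
    tensorSlice (waringTensor α A) k = Aᵀ * diagonal (fun m => α m * A m k) * A := by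
  ext i j
  simp only [tensorSlice, waringTensor, of_apply, mul_apply, transpose_apply, diagonal_apply,
    mul_ite, mul_zero, sum_ite_eq', mem_univ, if_true]
  exact sum_congr rfl fun _ _ => by ring

theorem commute_tensorSlice_waringTensor [DecidableEq ι] (hA : A * Aᵀ = 1) (k l : ι) :
    Commute (tensorSlice (waringTensor α A) k) (tensorSlice (waringTensor α A) l) := by
  rw [Commute, SemiconjBy, tensorSlice_waringTensor, tensorSlice_waringTensor]
  simp only [Matrix.mul_assoc, ← Matrix.mul_assoc A, hA, Matrix.one_mul,
    ← Matrix.mul_assoc (diagonal _), diagonal_mul_diagonal, mul_comm]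

end WaringTensor

section Eigenvectors

variable {ι R : Type*} [Fintype ι] [DecidableEq ι] [CommRing R]

theorem Matrix.eq_transpose_mul_diagonal_mul_of_mulVec_eq_smul {M Q : Matrix ι ι R}
    {μ : ι → R} (hQ : Qᵀ * Q = 1) (h : ∀ a, M *ᵥ Q a = μ a • Q a) : M = Qᵀ * diagonal μ * Q := by
  have hcols : M * Qᵀ = Qᵀ * diagonal μ := by
    ext i a
    rw [mul_diagonal, transpose_apply, mul_comm]
    exact congrFun (h a) i
  rw [← hcols, Matrix.mul_assoc, hQ, Matrix.mul_one]

variable {T : ι → ι → ι → R} {Q : Matrix ι ι R} {μ : ι → ι → R}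

theorem IsSymmetricTensor.eigenvalue_eq (hT : IsSymmetricTensor T) (hQ : Q * Qᵀ = 1)
    (heig : ∀ k a, tensorSlice T k *ᵥ Q a = μ k a • Q a) (k a : ι) :
    μ k a = (∑ i, Q a i * μ i a) * Q a k := by
  have hnorm : Q a ⬝ᵥ Q a = 1 := by
    simpa [mul_apply, dotProduct] using congrFun (congrFun hQ a) a
  calc μ k a = Q a ⬝ᵥ (tensorSlice T k *ᵥ Q a) := by
        rw [heig, dotProduct_smul, hnorm, smul_eq_mul, mul_one]
    _ = ∑ i, Q a i * (tensorSlice T i *ᵥ Q a) k := by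
        simp only [dotProduct, mulVec, tensorSlice, of_apply, hT.apply_comm13 _ _ k]
    _ = (∑ i, Q a i * μ i a) * Q a k := by
        simp only [heig, Pi.smul_apply, smul_eq_mul, sum_mul, mul_assoc]

theorem IsSymmetricTensor.eq_waringTensor_of_mulVec_eq_smul (hT : IsSymmetricTensor T)
    (hQ : Q * Qᵀ = 1) (heig : ∀ k a, tensorSlice T k *ᵥ Q a = μ k a • Q a) :
    T = waringTensor (fun a => ∑ i, Q a i * μ i a) Q := by
  funext i j k
  have hslice :=
    eq_transpose_mul_diagonal_mul_of_mulVec_eq_smul (mul_eq_one_comm.mp hQ) (heig k)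
  rw [funext (hT.eigenvalue_eq hQ heig k), ← tensorSlice_waringTensor] at hslice
  exact congrFun (congrFun hslice i) j

end Eigenvectors

theorem exists_orthogonal_common_eigenvectors {ι : Type*} {n : ℕ}
    (M : ι → Matrix (Fin n) (Fin n) ℝ) (hM : ∀ k, (M k).IsSymm)
    (hcomm : Pairwise fun k l => Commute (M k) (M l)) :
    ∃ (Q : Matrix (Fin n) (Fin n) ℝ) (μ : ι → Fin n → ℝ),
      Q * Qᵀ = 1 ∧ ∀ k a, M k *ᵥ Q a = μ k a • Q a := by
  classical
  let L : ι → Module.End ℝ (EuclideanSpace ℝ (Fin n)) := fun k => (M k).toEuclideanLin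
  have hL : ∀ k, (L k).IsSymmetric := fun k =>
    isSymmetric_toEuclideanLin_iff.mpr (isHermitian_iff_isSymm.mpr (hM k))
  have hLcomm : Pairwise fun k l => Commute (L k) (L l) := fun k l hkl => by
    simp only [Commute, SemiconjBy, L, Module.End.mul_eq_comp, ← toLpLin_mul_same,
      (hcomm hkl).eq]
  let V : (ι → ℝ) → Submodule ℝ (EuclideanSpace ℝ (Fin n)) :=
    fun χ => ⨅ k, Module.End.eigenspace (L k) (χ k)
  have hV : DirectSum.IsInternal V :=
    LinearMap.IsSymmetric.directSum_isInternal_of_pairwise_commute hL hLcomm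
  -- only finitely many joint eigenspaces are nonzero, and the basis construction needs that
  have : Fintype {χ // V χ ≠ ⊥} := hV.submodule_iSupIndep.fintypeNeBotOfFiniteDimensional
  have hV' : DirectSum.IsInternal fun χ : {χ // V χ ≠ ⊥} => V χ :=
    DirectSum.isInternal_ne_bot_iff.mpr hV
  have hOrth : OrthogonalFamily ℝ (fun χ : {χ // V χ ≠ ⊥} => V χ)
      fun χ => (V χ.1).subtypeₗᵢ := fun χ χ' hχ =>
    LinearMap.IsSymmetric.orthogonalFamily_iInf_eigenspaces hL (Subtype.val_injective.ne hχ)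
  have hn : Module.finrank ℝ (EuclideanSpace ℝ (Fin n)) = n := finrank_euclideanSpace_fin
  let b := hV'.subordinateOrthonormalBasis hn hOrth
  let χ : Fin n → ι → ℝ := fun a => (hV'.subordinateOrthonormalBasisIndex hn a hOrth).1
  refine ⟨Matrix.of fun a => WithLp.ofLp (b a), fun k a => χ a k, ?_, fun k a => ?_⟩
  · ext a c
    simpa [mul_apply, one_apply, PiLp.inner_apply, mul_comm]
      using orthonormal_iff_ite.mp b.orthonormal a c
  · have hmem := (Submodule.mem_iInf _).mp
      (hV'.subordinateOrthonormalBasis_subordinate hn a hOrth) k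
    exact congrArg WithLp.ofLp (Module.End.mem_eigenspace_iff.mp hmem)

/-- A real symmetric tensor of order 3 admits an orthogonal Waring decomposition iff
its slices pairwise commute. -/
theorem real_orthogonal_waring_iff_slices_commute {n : ℕ}
    (T : Fin n → Fin n → Fin n → ℝ)
    (hsym : ∀ i j k, T i j k = T j i k ∧ T i j k = T i k j) :
    (∃ A : Matrix (Fin n) (Fin n) ℝ, Aᵀ * A = 1 ∧
      ∃ α : Fin n → ℝ, ∀ x : Fin n → ℝ,
        ∑ i, ∑ j, ∑ k, T i j k * x i * x j * x k
          = ∑ i, α i * (A.mulVec x i) ^ 3) ↔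
    (∀ k l : Fin n,
      (Matrix.of (fun i j => T i j k)) * (Matrix.of (fun i j => T i j l))
        = (Matrix.of (fun i j => T i j l)) * (Matrix.of (fun i j => T i j k))) := by
  have hT : IsSymmetricTensor T := hsym
  constructor
  · rintro ⟨A, hA, α, hdecomp⟩ k l
    have hwaring : T = waringTensor α A :=
      hT.eq_of_trilinearForm_diag_eq (isSymmetricTensor_waringTensor α A) fun x =>
        (hdecomp x).trans (trilinearForm_waringTensor_self α A x).symm
    subst hwaring
    exact commute_tensorSlice_waringTensor α A (mul_eq_one_comm.mp hA) k l
  · intro hcomm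
    obtain ⟨Q, μ, hQ, heig⟩ :=
      exists_orthogonal_common_eigenvectors (tensorSlice T) hT.isSymm_tensorSlice
        fun k l _ => hcomm k l
    refine ⟨Q, mul_eq_one_comm.mp hQ, fun a => ∑ i, Q a i * μ i a, fun x => ?_⟩
    rw [hT.eq_waringTensor_of_mulVec_eq_smul hQ heig]
    exact trilinearForm_waringTensor_self _ Q x
end

section
/- Let T be a symmetric tensor of order 3 and size n with entries in an arbitrary field K, and define the bilinear product on Kⁿ by eᵢ·eⱼ = Σₗ T_{ijl} eₗ extended bilinearly. Then the slices of T pairwise commute if and only if this product is associative. -/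
open Matrix

private lemma sum_rot3 {M : Type*} [AddCommMonoid M] {α : Type*} [Fintype α]
    (f : α → α → α → M) :
    ∑ a, ∑ b, ∑ c, f a b c = ∑ c, ∑ a, ∑ b, f a b c := by
  calc ∑ a, ∑ b, ∑ c, f a b c
      = ∑ a, ∑ c, ∑ b, f a b c := Finset.sum_congr rfl fun a _ => Finset.sum_comm
    _ = ∑ c, ∑ a, ∑ b, f a b c := Finset.sum_comm

private lemma sum_rot4 {M : Type*} [AddCommMonoid M] {α : Type*} [Fintype α]
    (f : α → α → α → α → M) :
    ∑ l, ∑ a, ∑ b, ∑ c, f l a b c = ∑ a, ∑ b, ∑ c, ∑ l, f l a b c := by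
  calc ∑ l, ∑ a, ∑ b, ∑ c, f l a b c
      = ∑ a, ∑ l, ∑ b, ∑ c, f l a b c := Finset.sum_comm
    _ = ∑ a, ∑ b, ∑ l, ∑ c, f l a b c :=
        Finset.sum_congr rfl fun a _ => Finset.sum_comm
    _ = ∑ a, ∑ b, ∑ c, ∑ l, f l a b c :=
        Finset.sum_congr rfl fun a _ => Finset.sum_congr rfl fun b _ => Finset.sum_comm

/-- For a symmetric tensor `T` of order 3 over an arbitrary field, the slices of `T`
pairwise commute iff the bilinear product `eᵢ·eⱼ = Σₗ T_{ijl} eₗ` (extended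
bilinearly to `Kⁿ`) is associative. -/
theorem slices_commute_iff_associative {K : Type*} [Field K] {n : ℕ}
    (T : Fin n → Fin n → Fin n → K)
    (hsym : ∀ i j k, T i j k = T j i k ∧ T i j k = T i k j)
    (mul : (Fin n → K) → (Fin n → K) → (Fin n → K))
    (hmul : ∀ u v l, mul u v l = ∑ i, ∑ j, u i * v j * T i j l) :
    (∀ k l : Fin n,
      (Matrix.of (fun i j => T i j k)) * (Matrix.of (fun i j => T i j l))
        = (Matrix.of (fun i j => T i j l)) * (Matrix.of (fun i j => T i j k))) ↔
    (∀ u v w : Fin n → K, mul (mul u v) w = mul u (mul v w)) := by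
  have h1 : ∀ i j k, T i j k = T j i k := fun i j k => (hsym i j k).1
  have h2 : ∀ i j k, T i j k = T i k j := fun i j k => (hsym i j k).2
  -- the key intermediate identity
  have expandL : ∀ u v w m, mul (mul u v) w m
      = ∑ a, ∑ b, ∑ c, u a * v b * w c * (∑ l, T a b l * T l c m) := by
    intro u v w m
    calc mul (mul u v) w m
        = ∑ l, ∑ c, (∑ a, ∑ b, u a * v b * T a b l) * w c * T l c m := by
          rw [hmul]
          exact Finset.sum_congr rfl fun l _ => Finset.sum_congr rfl fun c _ => by rw [hmul]
      _ = ∑ l, ∑ c, ∑ a, ∑ b, u a * v b * w c * (T a b l * T l c m) := by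
          refine Finset.sum_congr rfl fun l _ => Finset.sum_congr rfl fun c _ => ?_
          rw [Finset.sum_mul, Finset.sum_mul]
          exact Finset.sum_congr rfl fun a _ => by
            rw [Finset.sum_mul, Finset.sum_mul]
            exact Finset.sum_congr rfl fun b _ => by ring
      _ = ∑ l, ∑ a, ∑ b, ∑ c, u a * v b * w c * (T a b l * T l c m) :=
          Finset.sum_congr rfl fun l _ => (sum_rot3 _).symm
      _ = ∑ a, ∑ b, ∑ c, ∑ l, u a * v b * w c * (T a b l * T l c m) := sum_rot4 _
      _ = ∑ a, ∑ b, ∑ c, u a * v b * w c * (∑ l, T a b l * T l c m) := by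
          refine Finset.sum_congr rfl fun a _ => Finset.sum_congr rfl fun b _ =>
            Finset.sum_congr rfl fun c _ => ?_
          rw [Finset.mul_sum]
  have expandR : ∀ u v w m, mul u (mul v w) m
      = ∑ a, ∑ b, ∑ c, u a * v b * w c * (∑ l, T b c l * T a l m) := by
    intro u v w m
    calc mul u (mul v w) m
        = ∑ a, ∑ l, u a * (∑ b, ∑ c, v b * w c * T b c l) * T a l m := by
          rw [hmul]
          exact Finset.sum_congr rfl fun a _ => Finset.sum_congr rfl fun l _ => by rw [hmul]
      _ = ∑ a, ∑ l, ∑ b, ∑ c, u a * v b * w c * (T b c l * T a l m) := by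
          refine Finset.sum_congr rfl fun a _ => Finset.sum_congr rfl fun l _ => ?_
          rw [Finset.mul_sum, Finset.sum_mul]
          refine Finset.sum_congr rfl fun b _ => ?_
          rw [Finset.mul_sum, Finset.sum_mul]
          exact Finset.sum_congr rfl fun c _ => by ring
      _ = ∑ a, ∑ b, ∑ c, ∑ l, u a * v b * w c * (T b c l * T a l m) :=
          Finset.sum_congr rfl fun a _ => (sum_rot3 _).symm
      _ = ∑ a, ∑ b, ∑ c, u a * v b * w c * (∑ l, T b c l * T a l m) := by
          refine Finset.sum_congr rfl fun a _ => Finset.sum_congr rfl fun b _ =>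
            Finset.sum_congr rfl fun c _ => ?_
          rw [Finset.mul_sum]
  constructor
  · intro hc u v w
    have C : ∀ a b c d, ∑ p, T a p b * T p c d = ∑ p, T a p d * T p c b := by
      intro a b c d
      have := congrFun (congrFun (hc b d) a) c
      simpa [Matrix.mul_apply] using this
    have H : ∀ i j k m, ∑ l, T i j l * T l k m = ∑ l, T j k l * T i l m := by
      intro i j k m
      calc ∑ l, T i j l * T l k m
          = ∑ l, T j l i * T l k m := by
            refine Finset.sum_congr rfl fun l _ => ?_
            rw [h1 i j l, h2 j i l]
        _ = ∑ l, T j l m * T l k i := C j i k m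
        _ = ∑ l, T i l k * T l j m := by
            refine Finset.sum_congr rfl fun l _ => ?_
            rw [h1 j l m, h2 l k i, h1 l i k]
            ring
        _ = ∑ l, T i l m * T l j k := C i k j m
        _ = ∑ l, T j k l * T i l m := by
            refine Finset.sum_congr rfl fun l _ => ?_
            rw [h1 l j k, h2 j l k]
            ring
    funext m
    rw [expandL, expandR]
    refine Finset.sum_congr rfl fun a _ => Finset.sum_congr rfl fun b _ =>
      Finset.sum_congr rfl fun c _ => ?_
    rw [H a b c m]
  · intro hA k l
    have H : ∀ a b c m, ∑ p, T a b p * T p c m = ∑ p, T b c p * T a p m := by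
      intro a b c m
      have := congrFun (hA (Pi.single a 1) (Pi.single b 1) (Pi.single c 1)) m
      rw [expandL, expandR] at this
      simpa [Pi.single_apply] using this
    ext i j
    simp only [Matrix.mul_apply, Matrix.of_apply]
    calc ∑ p, T i p k * T p j l
        = ∑ p, T i k p * T p j l := by
          exact Finset.sum_congr rfl fun p _ => by rw [h2 i k p]
      _ = ∑ p, T k j p * T i p l := H i k j l
      _ = ∑ p, T i p l * T p j k := by
          refine Finset.sum_congr rfl fun p _ => ?_
          rw [h2 k j p, h1 k p j, h2 p k j]
          ring
end

section
/- There do not exist two linear forms ℓ₁, ℓ₂ in variables x₁, x₂ over ℂ such that x₁x₂² = ℓ₁(x₁,x₂)³ + ℓ₂(x₁,x₂)³. More generally, if l₁l₂² = ℓ₁³ + ℓ₂³ with l₁, l₂ linear forms in x₁, x₂, then l₁ and l₂ are linearly dependent. -/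
/-- Discriminant identity: if the coefficients of a binary cubic come from
`ℓ₁³ + ℓ₂³`, the discriminant is `-27 (ad - bc)⁶`. -/
private lemma disc_sum_cubes (a b c d A B C E : ℂ)
    (hA : a ^ 3 + c ^ 3 = A) (hB : 3 * (a ^ 2 * b + c ^ 2 * d) = B)
    (hC : 3 * (a * b ^ 2 + c * d ^ 2) = C) (hE : b ^ 3 + d ^ 3 = E) :
    18 * A * B * C * E - 4 * B ^ 3 * E + B ^ 2 * C ^ 2 - 4 * A * C ^ 3
      - 27 * A ^ 2 * E ^ 2 = -27 * (a * d - b * c) ^ 6 := by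
  subst hA hB hC hE; ring

private lemma aux (l₁ l₂ ℓ₁ ℓ₂ : Fin 2 → ℂ)
    (h : ∀ x : Fin 2 → ℂ,
      (l₁ 0 * x 0 + l₁ 1 * x 1) * (l₂ 0 * x 0 + l₂ 1 * x 1) ^ 2
        = (ℓ₁ 0 * x 0 + ℓ₁ 1 * x 1) ^ 3 + (ℓ₂ 0 * x 0 + ℓ₂ 1 * x 1) ^ 3) :
    ¬ LinearIndependent ℂ ![l₁, l₂] := by
  intro hli
  rw [linearIndependent_fin2] at hli
  obtain ⟨hne, hns⟩ := hli
  simp only [Matrix.cons_val_one, Matrix.head_cons, Matrix.cons_val_zero] at hne hns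
  set p := l₁ 0 with hp
  set q := l₁ 1 with hq
  set r := l₂ 0 with hr
  set s := l₂ 1 with hs
  set a := ℓ₁ 0
  set b := ℓ₁ 1
  set c := ℓ₂ 0
  set d := ℓ₂ 1
  have h10 := h ![1, 0]
  have h01 := h ![0, 1]
  have h11 := h ![1, 1]
  have hm1 := h ![-1, 1]
  simp only [Matrix.cons_val_zero, Matrix.cons_val_one, Matrix.head_cons] at h10 h01 h11 hm1
  -- coefficient equations
  have eA : a ^ 3 + c ^ 3 = p * r ^ 2 := by linear_combination -h10
  have eE : b ^ 3 + d ^ 3 = q * s ^ 2 := by linear_combination -h01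
  have eB : 3 * (a ^ 2 * b + c ^ 2 * d) = q * r ^ 2 + 2 * p * r * s := by
    linear_combination (-h11 - hm1) / 2 - eE
  have eC : 3 * (a * b ^ 2 + c * d ^ 2) = p * s ^ 2 + 2 * q * r * s := by
    linear_combination (-h11 + hm1) / 2 - eA
  -- discriminant of `l₁ l₂²` vanishes, hence `ad - bc = 0`
  have hD6 : -27 * (a * d - b * c) ^ 6 = 0 := by
    rw [← disc_sum_cubes a b c d _ _ _ _ eA eB eC eE]; ring
  have hD : a * d - b * c = 0 :=
    pow_eq_zero_iff (n := 6) (by norm_num) |>.mp (by linear_combination hD6 / (-27))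
  -- Hessian of the RHS vanishes (it is a cube up to scalar)
  have h2 : r ^ 2 * (p * s - q * r) ^ 2 = 0 := by
    linear_combination 3 * (p * s ^ 2 + 2 * q * r * s) * eA
      - (3 * (a ^ 2 * b + c ^ 2 * d) + (q * r ^ 2 + 2 * p * r * s)) * eB
      + 3 * (a ^ 3 + c ^ 3) * eC - 9 * a * c * (a * d - b * c) * hD
  have h0 : s ^ 2 * (p * s - q * r) ^ 2 = 0 := by
    linear_combination 3 * (q * s ^ 2) * eB
      - (3 * (a * b ^ 2 + c * d ^ 2) + (p * s ^ 2 + 2 * q * r * s)) * eC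
      + 3 * (3 * (a ^ 2 * b + c ^ 2 * d)) * eE - 9 * b * d * (a * d - b * c) * hD
  -- hence `ps - qr = 0`
  have hδ : p * s - q * r = 0 := by
    by_contra hδ
    have hδ2 : (p * s - q * r) ^ 2 ≠ 0 := pow_ne_zero _ hδ
    have hr0 : r = 0 := by
      rcases mul_eq_zero.mp h2 with h' | h'
      · exact pow_eq_zero_iff (n := 2) (by norm_num) |>.mp h'
      · exact absurd h' hδ2
    have hs0 : s = 0 := by
      rcases mul_eq_zero.mp h0 with h' | h'
      · exact pow_eq_zero_iff (n := 2) (by norm_num) |>.mp h'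
      · exact absurd h' hδ2
    exact hδ (by rw [hr0, hs0]; ring)
  -- `l₂ ≠ 0` and `ps = qr`, so `l₁` is a multiple of `l₂`: contradiction
  have hrs : r ≠ 0 ∨ s ≠ 0 := by
    by_contra hcon
    push_neg at hcon
    apply hne
    ext i
    fin_cases i
    · show l₂ 0 = 0; rw [← hr]; exact hcon.1
    · show l₂ 1 = 0; rw [← hs]; exact hcon.2
  rcases hrs with hr' | hs'
  · apply hns (p / r)
    ext i
    fin_cases i
    · show p / r * l₂ 0 = l₁ 0
      rw [← hr, ← hp]; field_simp
    · show p / r * l₂ 1 = l₁ 1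
      rw [← hs, ← hq]; field_simp; linear_combination hδ
  · apply hns (q / s)
    ext i
    fin_cases i
    · show q / s * l₂ 0 = l₁ 0
      rw [← hr, ← hp]; field_simp; linear_combination -hδ
    · show q / s * l₂ 1 = l₁ 1
      rw [← hs, ← hq]; field_simp

/-- `x₁x₂²` is not a sum of two cubes of linear forms; more generally, if
`l₁l₂² = ℓ₁³ + ℓ₂³` with `l₁, l₂` linear forms in two variables, then `l₁, l₂` are
linearly dependent. -/
theorem not_sum_two_cubes :
    (¬ ∃ a b c d : ℂ, ∀ x y : ℂ,
        x * y ^ 2 = (a * x + b * y) ^ 3 + (c * x + d * y) ^ 3) ∧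
    (∀ l₁ l₂ ℓ₁ ℓ₂ : Fin 2 → ℂ,
      (∀ x : Fin 2 → ℂ,
        (l₁ 0 * x 0 + l₁ 1 * x 1) * (l₂ 0 * x 0 + l₂ 1 * x 1) ^ 2
          = (ℓ₁ 0 * x 0 + ℓ₁ 1 * x 1) ^ 3 + (ℓ₂ 0 * x 0 + ℓ₂ 1 * x 1) ^ 3) →
      ¬ LinearIndependent ℂ ![l₁, l₂]) := by
  refine ⟨?_, fun l₁ l₂ ℓ₁ ℓ₂ h => aux l₁ l₂ ℓ₁ ℓ₂ h⟩
  rintro ⟨a, b, c, d, h⟩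
  apply aux ![1, 0] ![0, 1] ![a, b] ![c, d]
  · intro x
    simp only [Matrix.cons_val_zero, Matrix.cons_val_one, Matrix.head_cons]
    linear_combination h (x 0) (x 1)
  · rw [linearIndependent_fin2]
    constructor
    · simp only [Matrix.cons_val_one, Matrix.head_cons]
      intro h0
      have := congrFun h0 1
      simp at this
    · intro t ht
      have := congrFun ht 0
      simp at this
end

section
/- Suppose l₁(x₁,x₂)l₂(x₁,x₂)² = ℓ₁(x₁,…,xₙ)³ + ⋯ + ℓ_k(x₁,…,xₙ)³ where l₁, l₂ are linearly independent linear forms in x₁,x₂ and ℓ₁,…,ℓ_k are linear forms in n variables over ℂ. Then ℓ₁,…,ℓ_k are linearly dependent. -/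
lemma sum_two_support {n : ℕ} (i0 i1 : Fin n) (h : i0 ≠ i1) (f : Fin n → ℂ) (u v : ℂ) :
    ∑ m, f m * (u * (if m = i0 then 1 else 0) + v * (if m = i1 then 1 else 0))
      = f i0 * u + f i1 * v := by
  have key : ∀ m, f m * (u * (if m = i0 then 1 else 0) + v * (if m = i1 then 1 else 0))
      = (if m = i0 then f m * u else 0) + (if m = i1 then f m * v else 0) := by
    intro m
    by_cases h0 : m = i0 <;> by_cases h1 : m = i1
    · exact absurd (h0.symm.trans h1) h
    · simp [h0, h1, h, Ne.symm h]; try ring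
    · simp [h0, h1, h, Ne.symm h]; try ring
    · simp [h0, h1]
  rw [Finset.sum_congr rfl (fun m _ => key m), Finset.sum_add_distrib,
    Finset.sum_ite_eq', Finset.sum_ite_eq']
  simp

lemma sum_perturb {n : ℕ} (i : Fin n) (f x : Fin n → ℂ) (c : ℂ) :
    ∑ m, f m * (x m + c * (if m = i then 1 else 0)) = (∑ m, f m * x m) + f i * c := by
  have key : ∀ m, f m * (x m + c * (if m = i then 1 else 0))
      = f m * x m + (if m = i then f m * c else 0) := by
    intro m
    by_cases hm : m = i <;> simp [hm] <;> try ring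
  rw [Finset.sum_congr rfl (fun m _ => key m), Finset.sum_add_distrib, Finset.sum_ite_eq']
  simp

lemma sum_single' {n : ℕ} (m : Fin n) (f : Fin n → ℂ) :
    ∑ i, f i * (if i = m then 1 else 0) = f m := by
  simp [mul_ite, Finset.sum_ite_eq']

lemma pair_dep (p q : Fin 2 → ℂ) (hD : p 0 * q 1 - p 1 * q 0 = 0) :
    ¬ LinearIndependent ℂ ![p, q] := by
  intro h
  rw [Fintype.linearIndependent_iff] at h
  by_cases hp0 : p 0 = 0
  · by_cases hp1 : p 1 = 0
    · have h2 : ∀ m : Fin 2, (1:ℂ) * p m + 0 * q m = 0 := by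
        rw [Fin.forall_fin_two]
        constructor <;> first | linear_combination hp0 | linear_combination hp1 | ring1
      have h0 := h ![1, 0] (by
        funext m; simpa [Fin.sum_univ_two] using h2 m) 0
      simp at h0
    · have h2 : ∀ m : Fin 2, q 1 * p m + -(p 1) * q m = 0 := by
        rw [Fin.forall_fin_two]
        constructor <;> first | linear_combination hD | linear_combination -hD | ring1
      have h1 := h ![q 1, -(p 1)] (by
        funext m; simpa [Fin.sum_univ_two] using h2 m) 1
      simp at h1
      exact hp1 h1
  · have h2 : ∀ m : Fin 2, q 0 * p m + -(p 0) * q m = 0 := by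
      rw [Fin.forall_fin_two]
      constructor <;> first | linear_combination hD | linear_combination -hD | ring1
    have h1 := h ![q 0, -(p 0)] (by
      funext m; simpa [Fin.sum_univ_two] using h2 m) 1
    simp at h1
    exact hp0 h1

/-- If `l₁(x₁,x₂) l₂(x₁,x₂)² = ℓ₁³ + ⋯ + ℓ_k³` with `l₁, l₂` linearly independent
linear forms in two variables and `ℓ₁,…,ℓ_k` linear forms in `n` variables, then the
`ℓⱼ` are linearly dependent. -/
theorem sum_cubes_of_l1l2sq_linearly_dependent {n k : ℕ} (hn : 2 ≤ n)
    (l₁ l₂ : Fin 2 → ℂ) (hl : LinearIndependent ℂ ![l₁, l₂])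
    (ℓ : Fin k → Fin n → ℂ)
    (heq : ∀ x : Fin n → ℂ,
      (l₁ 0 * x ⟨0, by omega⟩ + l₁ 1 * x ⟨1, by omega⟩) *
        (l₂ 0 * x ⟨0, by omega⟩ + l₂ 1 * x ⟨1, by omega⟩) ^ 2
        = ∑ j, (∑ i, ℓ j i * x i) ^ 3) :
    ¬ LinearIndependent ℂ ℓ := by
  intro hL
  have hn0 : 0 < n := by omega
  have hn1 : 1 < n := by omega
  set i0 : Fin n := ⟨0, hn0⟩ with hi0
  set i1 : Fin n := ⟨1, hn1⟩ with hi1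
  have hne : i0 ≠ i1 := by simp [hi0, hi1, Fin.ext_iff]
  -- evaluation on points supported on the first two coordinates
  have heval : ∀ u v : ℂ,
      (l₁ 0 * u + l₁ 1 * v) * (l₂ 0 * u + l₂ 1 * v) ^ 2
        = ∑ j, (ℓ j i0 * u + ℓ j i1 * v) ^ 3 := by
    intro u v
    have h := heq (fun m => u * (if m = i0 then 1 else 0) + v * (if m = i1 then 1 else 0))
    have hs : ∀ j, (∑ i, ℓ j i *
        (u * (if i = i0 then 1 else 0) + v * (if i = i1 then 1 else 0)))
        = ℓ j i0 * u + ℓ j i1 * v := fun j => sum_two_support i0 i1 hne (ℓ j) u v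
    simp only [hs] at h
    simp only [if_true, if_neg hne, if_neg (Ne.symm hne), mul_one, mul_zero, add_zero,
      zero_add] at h
    exact h
  -- coordinates ≥ 2 of the ℓ j vanish
  have hsupp : ∀ i : Fin n, i ≠ i0 → i ≠ i1 → ∀ j, ℓ j i = 0 := by
    intro i h0 h1
    have key : ∀ (x : Fin n → ℂ) (c : ℂ),
        ∑ j, ((∑ m, ℓ j m * x m) + ℓ j i * c) ^ 3 = ∑ j, (∑ m, ℓ j m * x m) ^ 3 := by
      intro x c
      have hx := heq (fun m => x m + c * (if m = i then 1 else 0))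
      have hs : ∀ j, (∑ m, ℓ j m * (x m + c * (if m = i then 1 else 0)))
          = (∑ m, ℓ j m * x m) + ℓ j i * c := fun j => sum_perturb i (ℓ j) x c
      simp only [hs] at hx
      have e0 : (x i0 + c * (if i0 = i then (1:ℂ) else 0)) = x i0 := by
        rw [if_neg (fun hh : i0 = i => h0 hh.symm), mul_zero, add_zero]
      have e1 : (x i1 + c * (if i1 = i then (1:ℂ) else 0)) = x i1 := by
        rw [if_neg (fun hh : i1 = i => h1 hh.symm), mul_zero, add_zero]
      rw [e0, e1] at hx
      rw [← hx]
      exact heq x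
    have hrel : ∀ x : Fin n → ℂ, ∑ j, 6 * (ℓ j i) ^ 2 * (∑ m, ℓ j m * x m) = 0 := by
      intro x
      have k1 := key x 1
      have k2 := key x (-1)
      calc ∑ j, 6 * (ℓ j i) ^ 2 * (∑ m, ℓ j m * x m)
          = ∑ j, (((∑ m, ℓ j m * x m) + ℓ j i * 1) ^ 3
              + (((∑ m, ℓ j m * x m) + ℓ j i * (-1)) ^ 3
                - 2 * (∑ m, ℓ j m * x m) ^ 3)) :=
            Finset.sum_congr rfl (fun j _ => by ring)
        _ = (∑ j, ((∑ m, ℓ j m * x m) + ℓ j i * 1) ^ 3)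
              + ((∑ j, ((∑ m, ℓ j m * x m) + ℓ j i * (-1)) ^ 3)
                - ∑ j, 2 * (∑ m, ℓ j m * x m) ^ 3) := by
            rw [Finset.sum_add_distrib, Finset.sum_sub_distrib]
        _ = 0 := by
            rw [k1, k2, ← Finset.mul_sum]; ring
    have hvec : ∑ j, (6 * (ℓ j i) ^ 2) • ℓ j = 0 := by
      funext m
      have := hrel (fun m' => if m' = m then 1 else 0)
      have hs : ∀ j, (∑ m', ℓ j m' * (if m' = m then 1 else 0)) = ℓ j m :=
        fun j => sum_single' m (ℓ j)
      simp only [hs] at this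
      simpa [Finset.sum_apply] using this
    intro j
    have h6 := Fintype.linearIndependent_iff.mp hL (fun j => 6 * (ℓ j i) ^ 2) hvec j
    have h7 : (ℓ j i) ^ 2 = 0 := by linear_combination h6 / 6
    exact (pow_eq_zero_iff (by norm_num : (2:ℕ) ≠ 0)).mp h7
  -- the restricted pairs are linearly independent
  have hc : LinearIndependent ℂ (fun j => ![ℓ j i0, ℓ j i1] : Fin k → Fin 2 → ℂ) := by
    let ι : (Fin 2 → ℂ) →ₗ[ℂ] (Fin n → ℂ) :=
      { toFun := fun w m => if m = i0 then w 0 else if m = i1 then w 1 else 0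
        map_add' := by
          intro a b; funext m
          by_cases h0 : m = i0 <;> by_cases h1 : m = i1 <;> simp [h0, h1, hne, Ne.symm hne]
        map_smul' := by
          intro r a; funext m
          by_cases h0 : m = i0 <;> by_cases h1 : m = i1 <;> simp [h0, h1, hne, Ne.symm hne] }
    apply LinearIndependent.of_comp ι
    have hcomp : (ι ∘ fun j => ![ℓ j i0, ℓ j i1]) = ℓ := by
      funext j m
      by_cases h0 : m = i0
      · simp [ι, h0]
      · by_cases h1 : m = i1
        · simp [ι, h0, h1, hne, Ne.symm hne]
        · simp [ι, h0, h1, hne, Ne.symm hne, hsupp m h0 h1 j]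
    rw [hcomp]
    exact hL
  have hk : k ≤ 2 := by
    have := hc.fintype_card_le_finrank
    simpa using this
  -- surjectivity onto the first two coordinates, from independence of l₁, l₂
  have hD : l₁ 0 * l₂ 1 - l₁ 1 * l₂ 0 ≠ 0 := fun h => pair_dep l₁ l₂ h hl
  set D := l₁ 0 * l₂ 1 - l₁ 1 * l₂ 0 with hDdef
  have hsurj : ∀ a b : ℂ, ∃ u v : ℂ,
      l₁ 0 * u + l₁ 1 * v = a ∧ l₂ 0 * u + l₂ 1 * v = b := by
    intro a b
    refine ⟨(a * l₂ 1 - b * l₁ 1) / D, (b * l₁ 0 - a * l₂ 0) / D, ?_, ?_⟩ <;>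
      · field_simp
        ring
  interval_cases k
  · -- k = 0
    obtain ⟨u, v, h1, h2⟩ := hsurj 1 1
    have h := heval u v
    rw [h1, h2] at h
    simp at h
  · -- k = 1
    obtain ⟨u₁, v₁, h11, h12⟩ := hsurj 0 1
    obtain ⟨u₂, v₂, h21, h22⟩ := hsurj 1 0
    have hp : ℓ 0 i0 * u₁ + ℓ 0 i1 * v₁ = 0 := by
      have h := heval u₁ v₁
      rw [h11, h12] at h
      simp [Fin.sum_univ_one] at h
      exact (pow_eq_zero_iff (by norm_num : (3:ℕ) ≠ 0)).mp h.symm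
    have hq : ℓ 0 i0 * u₂ + ℓ 0 i1 * v₂ = 0 := by
      have h := heval u₂ v₂
      rw [h21, h22] at h
      simp [Fin.sum_univ_one] at h
      exact (pow_eq_zero_iff (by norm_num : (3:ℕ) ≠ 0)).mp h.symm
    have h := heval (u₁ + u₂) (v₁ + v₂)
    rw [show l₁ 0 * (u₁ + u₂) + l₁ 1 * (v₁ + v₂) = 1 by linear_combination h11 + h21,
      show l₂ 0 * (u₁ + u₂) + l₂ 1 * (v₁ + v₂) = 1 by linear_combination h12 + h22,
      Fin.sum_univ_one,
      show ℓ 0 i0 * (u₁ + u₂) + ℓ 0 i1 * (v₁ + v₂) = 0 by linear_combination hp + hq] at h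
    simp at h
  · -- k = 2
    set a₁ := ℓ 0 i0; set b₁ := ℓ 0 i1; set a₂ := ℓ 1 i0; set b₂ := ℓ 1 i1
    have hE : a₁ * b₂ - b₁ * a₂ ≠ 0 := by
      intro h
      apply pair_dep ![a₁, b₁] ![a₂, b₂] (by simpa using h)
      have : ![![a₁, b₁], ![a₂, b₂]] = (fun j => ![ℓ j i0, ℓ j i1] : Fin 2 → Fin 2 → ℂ) := by
        funext j m
        fin_cases j <;> rfl
      rw [this]
      exact hc
    set E := a₁ * b₂ - b₁ * a₂ with hEdef
    set α := (l₁ 0 * b₂ - l₁ 1 * a₂) / E with hα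
    set β := (l₁ 1 * a₁ - l₁ 0 * b₁) / E with hβ
    set γ := (l₂ 0 * b₂ - l₂ 1 * a₂) / E with hγ
    set δ := (l₂ 1 * a₁ - l₂ 0 * b₁) / E with hδ
    have key : ∀ s t : ℂ, (α * s + β * t) * (γ * s + δ * t) ^ 2 = s ^ 3 + t ^ 3 := by
      intro s t
      have h := heval ((s * b₂ - t * b₁) / E) ((t * a₁ - s * a₂) / E)
      rw [Fin.sum_univ_two,
        show l₁ 0 * ((s * b₂ - t * b₁) / E) + l₁ 1 * ((t * a₁ - s * a₂) / E)
            = α * s + β * t by rw [hα, hβ]; field_simp; ring,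
        show l₂ 0 * ((s * b₂ - t * b₁) / E) + l₂ 1 * ((t * a₁ - s * a₂) / E)
            = γ * s + δ * t by rw [hγ, hδ]; field_simp; ring,
        show a₁ * ((s * b₂ - t * b₁) / E) + b₁ * ((t * a₁ - s * a₂) / E) = s by
          field_simp; ring,
        show a₂ * ((s * b₂ - t * b₁) / E) + b₂ * ((t * a₁ - s * a₂) / E) = t by
          field_simp; ring] at h
      exact h
    have e1 : α * γ ^ 2 = 1 := by linear_combination key 1 0
    have e2 : β * δ ^ 2 = 1 := by linear_combination key 0 1
    have hc1 : 2 * α * γ * δ + β * γ ^ 2 = 0 := by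
      linear_combination (key 1 1) / 2 - (key 1 (-1)) / 2 - e2
    have hc2 : α * δ ^ 2 + 2 * β * γ * δ = 0 := by
      linear_combination (key 1 1) / 2 + (key 1 (-1)) / 2 - e1
    have hγ0 : γ ≠ 0 := by
      intro h
      rw [h] at e1
      simp at e1
    have hβ0 : β ≠ 0 := by
      intro h
      rw [h] at e2
      simp at e2
    have hδ0 : δ ≠ 0 := by
      intro h
      rw [h] at e2
      simp at e2
    have h5 : β * (γ ^ 2 * δ) = 0 := by
      linear_combination (2 * γ / 3) * hc2 - (δ / 3) * hc1
    exact mul_ne_zero hβ0 (mul_ne_zero (pow_ne_zero 2 hγ0) hδ0) h5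
end

section
/- Every complex orthogonal n×n matrix is the limit of complex orthogonal matrices all of whose first-column entries are nonzero. -/
open Matrix Filter

section Aux

variable {m : ℕ}

/-- A complex "rotation" matrix in the plane spanned by coordinates `0` and `k`. -/
noncomputable def rotAux (k : Fin (m + 1)) (t : ℝ) : Matrix (Fin (m + 1)) (Fin (m + 1)) ℂ :=
  Matrix.of fun i j =>
    if i = 0 then (if j = 0 then (Real.cos t : ℂ) else if j = k then -(Real.sin t : ℂ) else 0)
    else if i = k then (if j = 0 then (Real.sin t : ℂ) else if j = k then (Real.cos t : ℂ) else 0)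
    else (if j = i then 1 else 0)

lemma rotAux_orthogonal (k : Fin (m + 1)) (hk : k ≠ 0) (t : ℝ) :
    (rotAux k t)ᵀ * rotAux k t = 1 := by
  classical
  have hsum : ∀ a b : Fin (m+1), a = 0 ∨ a = k → b = 0 ∨ b = k →
      (Finset.univ.sum fun i => rotAux k t i a * rotAux k t i b)
      = rotAux k t 0 a * rotAux k t 0 b + rotAux k t k a * rotAux k t k b := by
    intro a b ha hb
    rw [show (Finset.univ.sum fun i => rotAux k t i a * rotAux k t i b)
        = ∑ i ∈ ({0, k} : Finset (Fin (m+1))), rotAux k t i a * rotAux k t i b from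
      (Finset.sum_subset (Finset.subset_univ _) (fun i _ hi => by
        simp only [Finset.mem_insert, Finset.mem_singleton, not_or] at hi
        rcases ha with rfl | rfl <;>
          simp [rotAux, hi.1, hi.2, Ne.symm hi.1, Ne.symm hi.2])).symm]
    rw [Finset.sum_insert (by simpa using Ne.symm hk), Finset.sum_singleton]
  ext a b
  rw [Matrix.mul_apply]
  simp only [Matrix.transpose_apply]
  by_cases ha0 : a = 0
  · by_cases hb0 : b = 0
    · rw [ha0, hb0, hsum 0 0 (Or.inl rfl) (Or.inl rfl), Matrix.one_apply_eq]
      simp [rotAux, hk]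
      rw [← Complex.ofReal_sin, ← Complex.ofReal_cos]
      norm_cast
      nlinarith [Real.sin_sq_add_cos_sq t]
    · by_cases hbk : b = k
      · rw [ha0, hbk, hsum 0 k (Or.inl rfl) (Or.inr rfl), Matrix.one_apply_ne (Ne.symm hk)]
        simp [rotAux, hk]
        ring
      · -- b ∉ {0, k}; each summand vanishes
        rw [Matrix.one_apply_ne (show a ≠ b from fun h => hb0 (h ▸ ha0))]
        apply Finset.sum_eq_zero
        intro i _
        by_cases hi0 : i = 0
        · simp [rotAux, hi0, hb0, hbk]
        · by_cases hik : i = k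
          · simp [rotAux, hi0, hik, hb0, hbk]
          · have : ¬ (0 : Fin (m+1)) = i := fun h => hi0 h.symm
            simp [rotAux, hi0, hik, this, ha0]
  · by_cases hak : a = k
    · by_cases hb0 : b = 0
      · rw [hak, hb0, hsum k 0 (Or.inr rfl) (Or.inl rfl), Matrix.one_apply_ne hk]
        simp [rotAux, hk]
        ring
      · by_cases hbk : b = k
        · rw [hak, hbk, hsum k k (Or.inr rfl) (Or.inr rfl), Matrix.one_apply_eq]
          simp [rotAux, hk, Ne.symm hk]
          rw [← Complex.ofReal_sin, ← Complex.ofReal_cos]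
          norm_cast
          nlinarith [Real.sin_sq_add_cos_sq t]
        · rw [Matrix.one_apply_ne (show a ≠ b from fun h => hbk (h ▸ hak))]
          apply Finset.sum_eq_zero
          intro i _
          by_cases hi0 : i = 0
          · simp [rotAux, hi0, hb0, hbk, hk]
          · by_cases hik : i = k
            · simp [rotAux, hi0, hik, hb0, hbk]
            · have : ¬ (k : Fin (m+1)) = i := fun h => hik h.symm
              simp [rotAux, hi0, hik, this, hak]
    · -- a ∉ {0, k}; sum reduces to the single term i = a
      rw [Finset.sum_eq_single a]
      · simp only [rotAux, Matrix.of_apply, if_neg ha0, if_neg hak, if_pos rfl, one_mul,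
          Matrix.one_apply]
        by_cases hba : b = a
        · simp [hba]
        · have : ¬ a = b := fun h => hba h.symm
          simp [hba, this]
      · intro i _ hia
        by_cases hi0 : i = 0
        · simp [rotAux, hi0, ha0, hak]
        · by_cases hik : i = k
          · simp [rotAux, hi0, hik, hk, ha0, hak]
          · have hai : ¬ a = i := fun h => hia h.symm
            simp [rotAux, hi0, hik, hai]
      · intro h; exact absurd (Finset.mem_univ a) h

lemma rotAux_zero (k : Fin (m + 1)) (hk : k ≠ 0) : rotAux k 0 = 1 := by
  ext i j
  by_cases hi0 : i = 0
  · rw [hi0]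
    by_cases hj0 : j = 0
    · rw [hj0]; simp [rotAux]
    · rw [Matrix.one_apply_ne (fun h => hj0 h.symm)]
      simp [rotAux, hj0]
  · by_cases hik : i = k
    · rw [hik]
      by_cases hj0 : j = 0
      · rw [hj0, Matrix.one_apply_ne hk]
        simp [rotAux, hk]
      · by_cases hjk : j = k
        · rw [hjk, Matrix.one_apply_eq]
          simp [rotAux, hk]
        · rw [Matrix.one_apply_ne (fun h : k = j => hjk h.symm)]
          simp [rotAux, hk, hj0, hjk]
    · by_cases hij : i = j
      · rw [← hij, Matrix.one_apply_eq]
        simp [rotAux, hi0, hik]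
      · rw [Matrix.one_apply_ne hij]
        have hji : ¬ j = i := fun h => hij h.symm
        simp [rotAux, hi0, hik, hji]

lemma rotAux_continuous (k : Fin (m + 1)) : Continuous fun t => rotAux k t := by
  apply continuous_matrix
  intro i j
  simp only [rotAux, Matrix.of_apply]
  split_ifs <;> fun_prop

lemma mul_rotAux_col (A : Matrix (Fin (m+1)) (Fin (m+1)) ℂ) (k : Fin (m+1)) (hk : k ≠ 0)
    (t : ℝ) (i : Fin (m+1)) :
    (A * rotAux k t) i 0 = (Real.cos t : ℂ) * A i 0 + (Real.sin t : ℂ) * A i k := by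
  classical
  rw [Matrix.mul_apply]
  rw [show (Finset.univ.sum fun j => A i j * rotAux k t j 0)
      = ∑ j ∈ ({0, k} : Finset (Fin (m+1))), A i j * rotAux k t j 0 from
    (Finset.sum_subset (Finset.subset_univ _) (fun j _ hj => by
      simp only [Finset.mem_insert, Finset.mem_singleton, not_or] at hj
      simp [rotAux, hj.1, hj.2, Ne.symm hj.1])).symm]
  rw [Finset.sum_insert (by simpa using Ne.symm hk), Finset.sum_singleton]
  simp [rotAux, hk]
  ring

/-- Main induction: if the number of zero entries in the first column is at most `N`,
then `A` is in the closure. -/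
lemma auxInd (N : ℕ) : ∀ A : Matrix (Fin (m+1)) (Fin (m+1)) ℂ, Aᵀ * A = 1 →
    (Finset.univ.filter fun i => A i 0 = 0).card ≤ N →
    A ∈ closure {B : Matrix (Fin (m+1)) (Fin (m+1)) ℂ |
      Bᵀ * B = 1 ∧ ∀ i : Fin (m+1), B i 0 ≠ 0} := by
  classical
  induction N with
  | zero =>
    intro A hA hcard
    apply subset_closure
    refine ⟨hA, fun i => ?_⟩
    intro h
    have hmem : i ∈ Finset.univ.filter fun i => A i 0 = 0 := by simp [h]
    have := Finset.card_eq_zero.mp (Nat.le_zero.mp hcard)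
    simp [this] at hmem
  | succ N ih =>
    intro A hA hcard
    by_cases hz : ∀ i, A i 0 ≠ 0
    · exact subset_closure ⟨hA, hz⟩
    push_neg at hz
    obtain ⟨i₀, hi₀⟩ := hz
    -- the row i₀ is nonzero: pick k with A i₀ k ≠ 0
    have hAAt : A * Aᵀ = 1 := mul_eq_one_comm.mpr hA
    have hrow : ∃ k, A i₀ k ≠ 0 := by
      by_contra h
      push_neg at h
      have h1 : (A * Aᵀ) i₀ i₀ = 0 := by
        rw [Matrix.mul_apply]
        apply Finset.sum_eq_zero
        intro j _
        simp [h j]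
      rw [hAAt] at h1
      simp at h1
    obtain ⟨k, hk⟩ := hrow
    have hk0 : k ≠ 0 := fun h => hk (h ▸ hi₀)
    set f : ℝ → Matrix (Fin (m+1)) (Fin (m+1)) ℂ := fun t => A * rotAux k t with hf
    have hforth : ∀ t, (f t)ᵀ * f t = 1 := by
      intro t
      rw [hf]
      simp only [Matrix.transpose_mul]
      calc (rotAux k t)ᵀ * Aᵀ * (A * rotAux k t)
          = (rotAux k t)ᵀ * (Aᵀ * A) * rotAux k t := by noncomm_ring
        _ = 1 := by rw [hA, mul_one, rotAux_orthogonal k hk0 t]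
    -- eventual properties
    have hev1 : ∀ᶠ t in nhdsWithin (0:ℝ) {0}ᶜ, ∀ i, A i 0 ≠ 0 → (f t) i 0 ≠ 0 := by
      apply Filter.Eventually.filter_mono nhdsWithin_le_nhds
      rw [eventually_all]
      intro i
      by_cases hAi : A i 0 ≠ 0
      · have hc : ContinuousAt (fun t => (f t) i 0) 0 := by
          have hcf : Continuous f := continuous_const.matrix_mul (rotAux_continuous k)
          exact (((continuous_apply (0 : Fin (m+1))).comp
            ((continuous_apply i).comp hcf)).continuousAt)
        have h0 : (f 0) i 0 ≠ 0 := by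
          simp only [hf]
          rw [rotAux_zero k hk0, mul_one]
          exact hAi
        filter_upwards [hc.eventually_ne h0] with t ht _
        exact ht
      · filter_upwards with t ht
        exact absurd ht hAi
    have hev2 : ∀ᶠ t in nhdsWithin (0:ℝ) {0}ᶜ, (f t) i₀ 0 ≠ 0 := by
      have hmem : Set.Ioo (-Real.pi) Real.pi ∈ nhdsWithin (0:ℝ) {0}ᶜ :=
        nhdsWithin_le_nhds (Ioo_mem_nhds (by simpa using Real.pi_pos) Real.pi_pos)
      filter_upwards [hmem, self_mem_nhdsWithin] with t ht ht0
      rw [hf]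
      simp only
      rw [mul_rotAux_col A k hk0 t i₀, hi₀, mul_zero, zero_add]
      apply mul_ne_zero _ hk
      simp only [ne_eq, Complex.ofReal_eq_zero]
      rw [Real.sin_eq_zero_iff_of_lt_of_lt ht.1 ht.2]
      exact ht0
    have hev : ∀ᶠ t in nhdsWithin (0:ℝ) {0}ᶜ,
        f t ∈ closure {B : Matrix (Fin (m+1)) (Fin (m+1)) ℂ |
          Bᵀ * B = 1 ∧ ∀ i : Fin (m+1), B i 0 ≠ 0} := by
      filter_upwards [hev1, hev2] with t ht1 ht2
      apply ih (f t) (hforth t)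
      have hsub : (Finset.univ.filter fun i => (f t) i 0 = 0) ⊆
          (Finset.univ.filter fun i => A i 0 = 0).erase i₀ := by
        intro i hi
        simp only [Finset.mem_filter, Finset.mem_univ, true_and] at hi
        rw [Finset.mem_erase]
        constructor
        · intro h; exact ht2 (h ▸ hi)
        · simp only [Finset.mem_filter, Finset.mem_univ, true_and]
          by_contra h
          exact ht1 i h hi
      have hmem : i₀ ∈ Finset.univ.filter fun i => A i 0 = 0 := by simp [hi₀]
      calc (Finset.univ.filter fun i => (f t) i 0 = 0).card
          ≤ ((Finset.univ.filter fun i => A i 0 = 0).erase i₀).card :=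
            Finset.card_le_card hsub
        _ = (Finset.univ.filter fun i => A i 0 = 0).card - 1 :=
            Finset.card_erase_of_mem hmem
        _ ≤ N := by
            have h1 : 1 ≤ (Finset.univ.filter fun i => A i 0 = 0).card :=
              Finset.card_pos.mpr ⟨i₀, hmem⟩
            omega
    have htend : Tendsto f (nhdsWithin (0:ℝ) {0}ᶜ) (nhds A) := by
      have hc : Continuous f := continuous_const.matrix_mul (rotAux_continuous k)
      have h2 : Tendsto f (nhds 0) (nhds (f 0)) := hc.continuousAt
      have h3 : f 0 = A := by rw [hf]; simp only [rotAux_zero k hk0, mul_one]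
      rw [h3] at h2
      exact h2.mono_left nhdsWithin_le_nhds
    have := mem_closure_of_tendsto htend hev
    rwa [closure_closure] at this

end Aux

/-- Every complex orthogonal matrix is a limit of complex orthogonal matrices with no
vanishing entry in the first column. -/
theorem orthogonal_mem_closure_nonzero_first_column {n : ℕ}
    (A : Matrix (Fin n) (Fin n) ℂ) (hA : Aᵀ * A = 1) :
    A ∈ closure {B : Matrix (Fin n) (Fin n) ℂ |
      Bᵀ * B = 1 ∧ ∀ i : Fin n, B i ⟨0, i.pos⟩ ≠ 0} := by
  classical
  match n, A, hA with
  | 0, A, hA =>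
    apply subset_closure
    exact ⟨hA, fun i => i.elim0⟩
  | Nat.succ m, A, hA =>
    have h0 : ∀ i : Fin (m+1), (⟨0, i.pos⟩ : Fin (m+1)) = 0 := fun i => rfl
    have key := auxInd (m := m) (Finset.univ.filter fun i => A i 0 = 0).card A hA le_rfl
    exact key
end

section
/- Let S = Σᵢ₌₁^r uᵢ^{⊗3} be a symmetric tensor where u₁,…,u_r are pairwise orthogonal nonzero vectors of ℂⁿ (for ⟨x,y⟩ = Σxᵢyᵢ). Then the slices of S pairwise commute, and moreover all uᵢ are isotropic if and only if the product of any two (possibly equal) slices of S equals 0. -/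
open Matrix

private lemma swap2 {n r : ℕ} (a : Fin n → ℂ) (g : Fin r → Fin n → ℂ) (w : Fin r → ℂ) :
    ∑ i, ∑ j, (a i * a j) * (∑ m, w m * (g m i * g m j))
      = ∑ m, w m * (∑ i, a i * g m i) ^ 2 := by
  simp only [Finset.mul_sum]
  rw [Finset.sum_congr rfl fun i (_ : i ∈ Finset.univ) => Finset.sum_comm,
    Finset.sum_comm]
  refine Finset.sum_congr rfl fun m _ => ?_
  rw [sq, Finset.sum_mul_sum]
  simp only [Finset.mul_sum]
  exact Finset.sum_congr rfl fun i _ => Finset.sum_congr rfl fun j _ => by ring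

private lemma key {n r : ℕ} (u : Fin r → Fin n → ℂ)
    (horth : ∀ i j, i ≠ j → ∑ l, u i l * u j l = 0) (k l i j : Fin n) :
    ((Matrix.of (fun i j => ∑ m, u m i * u m j * u m k)) *
      (Matrix.of (fun i j => ∑ m, u m i * u m j * u m l))) i j
    = ∑ m, (∑ x, u m x * u m x) * (u m i * u m j * u m k * u m l) := by
  simp only [Matrix.mul_apply, Matrix.of_apply, Finset.sum_mul, Finset.mul_sum]
  rw [Finset.sum_comm]
  refine Finset.sum_congr rfl fun m _ => ?_
  rw [Finset.sum_comm, Finset.sum_eq_single m]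
  · exact Finset.sum_congr rfl fun x _ => by ring
  · intro m' _ hm'
    have h0 := horth m' m hm'
    have heq : ∑ x, u m' i * u m' x * u m' k * (u m x * u m j * u m l)
        = (u m' i * u m' k * (u m j * u m l)) * ∑ x, u m' x * u m x := by
      rw [Finset.mul_sum]
      exact Finset.sum_congr rfl fun x _ => by ring
    rw [heq, h0, mul_zero]
  · simp

/-- For `S = Σᵢ uᵢ^{⊗3}` with the `uᵢ` pairwise orthogonal nonzero vectors of `ℂⁿ`,
the slices of `S` pairwise commute, and all the `uᵢ` are isotropic iff the product of
any two slices of `S` is zero. -/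
theorem slices_of_orthogonal_sum_commute {n r : ℕ}
    (u : Fin r → Fin n → ℂ)
    (hne : ∀ i, u i ≠ 0)
    (horth : ∀ i j, i ≠ j → ∑ l, u i l * u j l = 0) :
    (∀ k l : Fin n,
      (Matrix.of (fun i j => ∑ m, u m i * u m j * u m k)) *
        (Matrix.of (fun i j => ∑ m, u m i * u m j * u m l))
      = (Matrix.of (fun i j => ∑ m, u m i * u m j * u m l)) *
        (Matrix.of (fun i j => ∑ m, u m i * u m j * u m k))) ∧
    ((∀ i, ∑ l, u i l * u i l = 0) ↔
      ∀ k l : Fin n,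
        (Matrix.of (fun i j => ∑ m, u m i * u m j * u m k)) *
          (Matrix.of (fun i j => ∑ m, u m i * u m j * u m l)) = 0) := by
  constructor
  · intro k l
    ext i j
    rw [key u horth k l i j, key u horth l k i j]
    exact Finset.sum_congr rfl fun m _ => by ring
  · constructor
    · intro hiso k l
      ext i j
      rw [key u horth k l i j]
      simp [hiso]
    · intro h m0
      set c : Fin r → ℂ := fun m => ∑ x, u m x * u m x with hc
      set d : Fin r → ℂ := fun m => ∑ i, u m0 i * u m i with hd
      have E : ∀ i j k l : Fin n,
          ∑ m, c m * (u m i * u m j * u m k * u m l) = 0 := by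
        intro i j k l
        have h0 := congrFun (congrFun (h k l) i) j
        rw [key u horth k l i j] at h0
        simpa using h0
      have stepA : ∀ k l : Fin n,
          ∑ m, (c m * d m ^ 2) * (u m k * u m l) = 0 := by
        intro k l
        have hs := swap2 (u m0) u (fun m => c m * (u m k * u m l))
        have hz : ∑ i, ∑ j, (u m0 i * u m0 j) *
            (∑ m, (c m * (u m k * u m l)) * (u m i * u m j)) = 0 := by
          refine Finset.sum_eq_zero fun i _ => Finset.sum_eq_zero fun j _ => ?_
          have : ∑ m, (c m * (u m k * u m l)) * (u m i * u m j)
              = ∑ m, c m * (u m i * u m j * u m k * u m l) :=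
            Finset.sum_congr rfl fun m _ => by ring
          rw [this, E, mul_zero]
        have hres := hs.symm.trans hz
        calc ∑ m, (c m * d m ^ 2) * (u m k * u m l)
            = ∑ m, (c m * (u m k * u m l)) * d m ^ 2 :=
              Finset.sum_congr rfl fun m _ => by ring
          _ = 0 := hres
      have stepB : ∑ m, c m * d m ^ 4 = 0 := by
        have hs := swap2 (u m0) u (fun m => c m * d m ^ 2)
        have hz : ∑ i, ∑ j, (u m0 i * u m0 j) *
            (∑ m, (c m * d m ^ 2) * (u m i * u m j)) = 0 := by
          refine Finset.sum_eq_zero fun i _ => Finset.sum_eq_zero fun j _ => ?_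
          rw [stepA, mul_zero]
        have hres := hs.symm.trans hz
        calc ∑ m, c m * d m ^ 4
            = ∑ m, (c m * d m ^ 2) * d m ^ 2 :=
              Finset.sum_congr rfl fun m _ => by ring
          _ = 0 := hres
      have hd0 : ∀ m, m ≠ m0 → d m = 0 := fun m hm => horth m0 m (Ne.symm hm)
      have hdm0 : d m0 = c m0 := rfl
      rw [Finset.sum_eq_single m0 (fun m _ hm => by rw [hd0 m hm]; ring)
        (by simp)] at stepB
      rw [hdm0] at stepB
      have : c m0 ^ 5 = 0 := by rw [← stepB]; ring
      have := pow_eq_zero_iff (n := 5) (by norm_num) |>.mp this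
      exact this
end
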